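/- arXiv:2412.19347 — 2 statements merged into one kernel-verified Lean document; each statement's English description precedes it below -/
import Mathlib

section
/- The function Θ(x) = 2x² ∑_{n≥1} (2π²n⁴x² − 3πn²) e^{−πn²x²} satisfies the functional equation x·Θ(x) = Θ(1/x) for all x > 0. -/
/-!
Put `f x = 1/2 + ∑_{n ≥ 1} exp (-π n² x²)`, so that Jacobi's transformation
`θ(1/t) = √t θ(t)` becomes `f (1/x) = x f x`. Differentiating termwise, `Θ = (x² f')'`, and
this operator preserves the functional equation: differentiating `f (1/x) = x f x` once gives
`(x² f') (1/x) = -(f + x f') x`, and differentiating that gives `(x² f')' (1/x) = x (x² f')' x`.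
-/

open Real

noncomputable def Theta (x : ℝ) : ℝ :=
  2 * x ^ 2 * ∑' n : ℕ,
    (2 * π ^ 2 * ((n : ℝ) + 1) ^ 4 * x ^ 2 - 3 * π * ((n : ℝ) + 1) ^ 2) *
      Real.exp (-π * ((n : ℝ) + 1) ^ 2 * x ^ 2)

section InversionSymmetry

variable {f f' f'' g g' : ℝ → ℝ}

lemma deriv_at_inv_of_comp_inv_eq (hf : ∀ x, 0 < x → HasDerivAt f (f' x) x)
    (hg : ∀ x, 0 < x → HasDerivAt g (g' x) x) (hfg : ∀ x, 0 < x → f x⁻¹ = g x)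
    {x : ℝ} (hx : 0 < x) : f' x⁻¹ = -x ^ 2 * g' x := by
  have hcomp : HasDerivAt (fun y => f y⁻¹) (f' x⁻¹ * -(x ^ 2)⁻¹) x :=
    (hf x⁻¹ (inv_pos.2 hx)).comp x (hasDerivAt_inv hx.ne')
  have hcongr : HasDerivAt (fun y => f y⁻¹) (g' x) x :=
    (hg x hx).congr_of_eventuallyEq <| Filter.eventually_of_mem (Ioi_mem_nhds hx) hfg
  rw [← hcomp.unique hcongr]
  field_simp

lemma deriv_sq_mul_deriv_inv_eq_mul_of_inv_eq_mul (hf : ∀ x, 0 < x → HasDerivAt f (f' x) x)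
    (hf' : ∀ x, 0 < x → HasDerivAt f' (f'' x) x) (hfeq : ∀ x, 0 < x → f x⁻¹ = x * f x)
    {x : ℝ} (hx : 0 < x) :
    2 * x⁻¹ * f' x⁻¹ + x⁻¹ ^ 2 * f'' x⁻¹ = x * (2 * x * f' x + x ^ 2 * f'' x) := by
  have hd1 : ∀ y, 0 < y → f' y⁻¹ = -y ^ 2 * (f y + y * f' y) := fun y hy =>
    deriv_at_inv_of_comp_inv_eq hf
      (fun z hz => by simpa only [one_mul] using (hasDerivAt_id' z).fun_mul (hf z hz)) hfeq hy
  have hg : ∀ y, 0 < y → HasDerivAt (fun z => -z ^ 2 * (f z + z * f' z))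
      (-(2 * y) * (f y + y * f' y) + -y ^ 2 * (f' y + (f' y + y * f'' y))) y := fun y hy => by
    refine ((hasDerivAt_pow 2 y).fun_neg.fun_mul
      ((hf y hy).fun_add ((hasDerivAt_id' y).fun_mul (hf' y hy)))).congr_deriv ?_
    norm_num
  have hd2 := deriv_at_inv_of_comp_inv_eq hf' hg hd1 hx
  rw [hd1 x hx, hd2]
  field_simp
  ring

end InversionSymmetry

noncomputable def thetaSeries (k : ℕ) (t : ℝ) : ℝ :=
  ∑' n : ℕ, ((n : ℝ) + 1) ^ k * exp (-π * ((n : ℝ) + 1) ^ 2 * t)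

lemma summable_thetaSeries (k : ℕ) {t : ℝ} (ht : 0 < t) :
    Summable fun n : ℕ => ((n : ℝ) + 1) ^ k * exp (-π * ((n : ℝ) + 1) ^ 2 * t) := by
  have hgeom : Summable fun n : ℕ => ((n : ℝ) + 1) ^ k * exp (-(π * t) * ((n : ℝ) + 1)) := by
    simpa using (summable_nat_add_iff 1).mpr (summable_pow_mul_exp_neg_nat_mul k (by positivity))
  refine hgeom.of_nonneg_of_le (fun n => by positivity) fun n => ?_
  have hn : (n : ℝ) + 1 ≤ ((n : ℝ) + 1) ^ 2 := by nlinarith [n.cast_nonneg (α := ℝ)]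
  have hπt : 0 < π * t := by positivity
  refine mul_le_mul_of_nonneg_left (exp_le_exp.2 ?_) (by positivity)
  nlinarith

lemma hasDerivAt_thetaSeries (k : ℕ) {t : ℝ} (ht : 0 < t) :
    HasDerivAt (thetaSeries k) (-π * thetaSeries (k + 2) t) t := by
  have hterm (n : ℕ) (y : ℝ) :
      HasDerivAt (fun z => ((n : ℝ) + 1) ^ k * exp (-π * ((n : ℝ) + 1) ^ 2 * z))
      (-π * (((n : ℝ) + 1) ^ (k + 2) * exp (-π * ((n : ℝ) + 1) ^ 2 * y))) y := by
    refine (((hasDerivAt_id' y).const_mul _).exp.const_mul _).congr_deriv ?_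
    ring
  have hbound (n : ℕ) (y : ℝ) (hy : y ∈ Set.Ioi (t / 2)) :
      ‖-π * (((n : ℝ) + 1) ^ (k + 2) * exp (-π * ((n : ℝ) + 1) ^ 2 * y))‖ ≤
        π * (((n : ℝ) + 1) ^ (k + 2) * exp (-π * ((n : ℝ) + 1) ^ 2 * (t / 2))) := by
    rw [norm_mul, norm_neg, Real.norm_of_nonneg pi_pos.le, Real.norm_of_nonneg (by positivity)]
    have hy' : t / 2 < y := hy
    refine mul_le_mul_of_nonneg_left (mul_le_mul_of_nonneg_left (exp_le_exp.2 ?_) (by positivity))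
      pi_pos.le
    nlinarith [mul_pos pi_pos (sq_pos_of_pos (n.cast_add_one_pos (α := ℝ)))]
  have := hasDerivAt_tsum_of_isPreconnected
    ((summable_thetaSeries (k + 2) (half_pos ht)).mul_left π) isOpen_Ioi isPreconnected_Ioi
    (fun n y _ => hterm n y) hbound (half_lt_self ht)
    (summable_thetaSeries k ht) (half_lt_self ht)
  rwa [tsum_mul_left] at this

lemma hasDerivAt_thetaSeries_sq (k : ℕ) {x : ℝ} (hx : x ≠ 0) :
    HasDerivAt (fun y => thetaSeries k (y ^ 2)) (-2 * π * x * thetaSeries (k + 2) (x ^ 2)) x := by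
  refine ((hasDerivAt_thetaSeries k (by positivity)).comp x (hasDerivAt_pow 2 x)).congr_deriv ?_
  push_cast
  ring

lemma tsum_int_exp_neg_mul_sq {a : ℝ} (ha : 0 < a) :
    ∑' n : ℤ, exp (-π * a * (n : ℝ) ^ 2) = 1 + 2 * thetaSeries 0 a := by
  have hnat : Summable fun n : ℕ => exp (-π * a * (n : ℝ) ^ 2) := by
    refine (summable_nat_add_iff 1).mp ((summable_thetaSeries 0 ha).congr fun n => ?_)
    push_cast
    ring_nf
  have hint : Summable fun n : ℤ => exp (-π * a * (n : ℝ) ^ 2) :=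
    summable_int_iff_summable_nat_and_neg.mpr ⟨by simpa using hnat, by simpa using hnat⟩
  rw [tsum_int_eq_zero_add_two_mul_tsum_pnat (fun n => by simp) hint,
    tsum_pnat_eq_tsum_succ (f := fun n : ℕ => exp (-π * a * ((n : ℤ) : ℝ) ^ 2))]
  simp only [thetaSeries, Int.cast_zero, Nat.cast_ofNat, zero_pow two_ne_zero, mul_zero, exp_zero,
    nsmul_eq_mul]
  congr 2
  refine tsum_congr fun n => ?_
  push_cast
  ring_nf

lemma thetaSeries_zero_inv_sq {x : ℝ} (hx : 0 < x) :
    1 / 2 + thetaSeries 0 (x⁻¹ ^ 2) = x * (1 / 2 + thetaSeries 0 (x ^ 2)) := by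
  have h := Real.tsum_exp_neg_mul_int_sq (sq_pos_of_pos hx)
  rw [tsum_int_exp_neg_mul_sq (sq_pos_of_pos hx), ← sqrt_eq_rpow, sqrt_sq hx.le] at h
  have hinv :
      ∑' n : ℤ, exp (-π / x ^ 2 * (n : ℝ) ^ 2) = 1 + 2 * thetaSeries 0 (x⁻¹ ^ 2) := by
    rw [← tsum_int_exp_neg_mul_sq (by positivity)]
    congr! 3
    field_simp
  rw [hinv, one_div] at h
  linear_combination (-x / 2) * h - (1 / 2 + thetaSeries 0 (x⁻¹ ^ 2)) * mul_inv_cancel₀ hx.ne'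

lemma Theta_eq_thetaSeries {x : ℝ} (hx : x ≠ 0) :
    Theta x =
      4 * π ^ 2 * x ^ 4 * thetaSeries 4 (x ^ 2) - 6 * π * x ^ 2 * thetaSeries 2 (x ^ 2) := by
  have ht : 0 < x ^ 2 := by positivity
  have hsplit : ∀ n : ℕ,
      (2 * π ^ 2 * ((n : ℝ) + 1) ^ 4 * x ^ 2 - 3 * π * ((n : ℝ) + 1) ^ 2) *
      exp (-π * ((n : ℝ) + 1) ^ 2 * x ^ 2) =
        2 * π ^ 2 * x ^ 2 * (((n : ℝ) + 1) ^ 4 * exp (-π * ((n : ℝ) + 1) ^ 2 * x ^ 2)) -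
          3 * π * (((n : ℝ) + 1) ^ 2 * exp (-π * ((n : ℝ) + 1) ^ 2 * x ^ 2)) :=
    fun n => by ring
  rw [Theta, tsum_congr hsplit, ((summable_thetaSeries 4 ht).mul_left _).tsum_sub
    ((summable_thetaSeries 2 ht).mul_left _), tsum_mul_left, tsum_mul_left]
  simp only [thetaSeries]
  ring

theorem stmt_2 (x : ℝ) (hx : 0 < x) : x * Theta x = Theta (1 / x) := by
  have hf (y : ℝ) (hy : 0 < y) := (hasDerivAt_thetaSeries_sq 0 hy.ne').const_add (1 / 2)
  have hf' (y : ℝ) (hy : 0 < y) : HasDerivAt (fun z => -2 * π * z * thetaSeries 2 (z ^ 2))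
      (-2 * π * thetaSeries 2 (y ^ 2) + 4 * π ^ 2 * y ^ 2 * thetaSeries 4 (y ^ 2)) y := by
    refine (((hasDerivAt_id' y).const_mul (-2 * π)).fun_mul
      (hasDerivAt_thetaSeries_sq 2 hy.ne')).congr_deriv ?_
    ring
  have hsym := deriv_sq_mul_deriv_inv_eq_mul_of_inv_eq_mul hf hf'
    (fun y hy => thetaSeries_zero_inv_sq hy) hx
  rw [one_div, Theta_eq_thetaSeries hx.ne', Theta_eq_thetaSeries (inv_ne_zero hx.ne')]
  linear_combination -hsym
end

section
/- Θ(x) > 0 for all x > 0, where Θ(x) = 2x² ∑_{n≥1}(2π²n⁴x² − 3πn²)e^{−πn²x²}; in particular Θ(x) > 0 for x ≥ 1, and combined with the functional equation x·Θ(x) = Θ(1/x) this gives positivity for all x > 0. -/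
open Real

/-!
With `ψ x = ∑_{n ≥ 1} exp (-π n² x²)`, termwise differentiation gives `Θ x = (x² ψ' x)'`.
Jacobi's identity `1 + 2 ψ (1/x) = x (1 + 2 ψ x)` (Poisson summation), differentiated twice,
yields `Θ (1/x) = x Θ x`. For `x ≥ 1` every summand of `Θ` is positive, because
`2π² n⁴ x² ≥ 2π² n² > 3π n²`, and the functional equation carries positivity to `0 < x < 1`.
-/

open Set Filter Topology

theorem deriv_eq_of_comp_inv_eq {u v : ℝ → ℝ} {u' v' x : ℝ} (hx : 0 < x)
    (hu : HasDerivAt u u' x⁻¹) (hv : HasDerivAt v v' x) (huv : ∀ y > 0, u y⁻¹ = v y) :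
    u' = -(x ^ 2 * v') := by
  have hcomp : HasDerivAt (fun y => u y⁻¹) (u' * -(x ^ 2)⁻¹) x :=
    hu.comp x (hasDerivAt_inv hx.ne')
  have hloc : (fun y => u y⁻¹) =ᶠ[𝓝 x] v := eventually_of_mem (Ioi_mem_nhds hx) huv
  have := (hcomp.congr_of_eventuallyEq hloc.symm).unique hv
  field_simp at this ⊢
  linarith

theorem deriv_sq_mul_deriv_inv_eq_mul {h h' k k' : ℝ → ℝ}
    (hfe : ∀ x > 0, h x⁻¹ = x * h x) (hh : ∀ x > 0, HasDerivAt h (h' x) x)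
    (hk : ∀ x > 0, HasDerivAt k (k' x) x) (hkh : ∀ x > 0, k x = x ^ 2 * h' x)
    {x : ℝ} (hx : 0 < x) : k' x⁻¹ = x * k' x := by
  have hk_inv : ∀ y > 0, k y⁻¹ = -(h y + k y / y) := by
    intro y hy
    have hy' : 0 < y⁻¹ := inv_pos.2 hy
    have := deriv_eq_of_comp_inv_eq hy (hh _ hy') ((hasDerivAt_id' y).mul (hh y hy)) hfe
    rw [hkh _ hy', this, hkh y hy]
    field_simp
  have hv : HasDerivAt (fun y => -(h y + k y / y)) (-(k' x / x)) x := by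
    refine (((hh x hx).add ((hk x hx).div (hasDerivAt_id' x) hx.ne')).neg).congr_deriv ?_
    rw [hkh x hx]
    field_simp
    ring
  rw [deriv_eq_of_comp_inv_eq hx (hk _ (inv_pos.2 hx)) hv hk_inv]
  field_simp

/-- `1 + 2 * gaussTail x` is the Jacobi theta function `∑_{n : ℤ} exp (-π n² x²)`. -/
noncomputable def gaussTail (x : ℝ) : ℝ := ∑' n : ℕ, exp (-π * ((n : ℝ) + 1) ^ 2 * x ^ 2)

noncomputable def gaussTailDeriv (x : ℝ) : ℝ :=
  ∑' n : ℕ, -2 * π * ((n : ℝ) + 1) ^ 2 * x * exp (-π * ((n : ℝ) + 1) ^ 2 * x ^ 2)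

noncomputable def thetaSummand (x : ℝ) (n : ℕ) : ℝ :=
  (2 * π ^ 2 * ((n : ℝ) + 1) ^ 4 * x ^ 2 - 3 * π * ((n : ℝ) + 1) ^ 2) *
    exp (-π * ((n : ℝ) + 1) ^ 2 * x ^ 2)

theorem Theta_eq_tsum_thetaSummand (x : ℝ) : Theta x = 2 * x ^ 2 * ∑' n, thetaSummand x n := rfl

theorem summable_succ_pow_mul_exp_neg_sq (k : ℕ) {x : ℝ} (hx : x ≠ 0) :
    Summable fun n : ℕ => ((n : ℝ) + 1) ^ k * exp (-π * ((n : ℝ) + 1) ^ 2 * x ^ 2) :=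
  HurwitzKernelBounds.summable_f_nat k 1 (by positivity)

theorem summable_thetaSummand {x : ℝ} (hx : x ≠ 0) : Summable (thetaSummand x) := by
  refine (((summable_succ_pow_mul_exp_neg_sq 4 hx).mul_left (2 * π ^ 2 * x ^ 2)).sub
    ((summable_succ_pow_mul_exp_neg_sq 2 hx).mul_left (3 * π))).congr fun n => ?_
  simp only [thetaSummand]
  ring

theorem exp_neg_mul_sq_le_of_le (m : ℝ) {a y : ℝ} (ha : 0 ≤ a) (hay : a ≤ y) :
    exp (-π * m ^ 2 * y ^ 2) ≤ exp (-π * m ^ 2 * a ^ 2) := by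
  have : π * m ^ 2 * a ^ 2 ≤ π * m ^ 2 * y ^ 2 := by gcongr
  exact exp_le_exp.2 (by linarith)

theorem hasDerivAt_tsum_of_gauss_bound {f f' : ℕ → ℝ → ℝ} (j : ℕ) (C : ℝ → ℝ)
    (hf : ∀ n y, HasDerivAt (f n) (f' n y) y)
    (hf' : ∀ n {a b y : ℝ}, 0 < a → y ∈ Ioo a b →
      ‖f' n y‖ ≤ C b * (((n : ℝ) + 1) ^ j * exp (-π * ((n : ℝ) + 1) ^ 2 * a ^ 2)))
    {x : ℝ} (hx : 0 < x) (hsum : Summable (f · x)) :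
    HasDerivAt (fun y => ∑' n, f n y) (∑' n, f' n x) x := by
  have hmem : x ∈ Ioo (x / 2) (2 * x) := ⟨by linarith, by linarith⟩
  exact hasDerivAt_tsum_of_isPreconnected
    ((summable_succ_pow_mul_exp_neg_sq j (half_pos hx).ne').mul_left (C (2 * x)))
    isOpen_Ioo isPreconnected_Ioo (fun n y _ => hf n y)
    (fun n y hy => hf' n (half_pos hx) hy) hmem hsum hmem

theorem hasDerivAt_exp_neg_mul_sq (m y : ℝ) :
    HasDerivAt (fun x => exp (-π * m ^ 2 * x ^ 2))
      (-2 * π * m ^ 2 * y * exp (-π * m ^ 2 * y ^ 2)) y := by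
  have := ((hasDerivAt_pow 2 y).const_mul (-π * m ^ 2)).exp
  exact this.congr_deriv (by push_cast; ring)

theorem hasDerivAt_gaussTail {x : ℝ} (hx : 0 < x) :
    HasDerivAt gaussTail (gaussTailDeriv x) x := by
  refine hasDerivAt_tsum_of_gauss_bound 2 (fun b => 2 * π * b)
    (fun n y => hasDerivAt_exp_neg_mul_sq _ y) (fun n a b y ha hy => ?_) hx
    (by simpa using summable_succ_pow_mul_exp_neg_sq 0 hx.ne')
  have hy0 : 0 < y := ha.trans hy.1
  have hb : 0 < b := hy0.trans hy.2
  set m : ℝ := (n : ℝ) + 1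
  rw [show -2 * π * m ^ 2 * y * exp (-π * m ^ 2 * y ^ 2)
      = -(2 * π * y * (m ^ 2 * exp (-π * m ^ 2 * y ^ 2))) by ring,
    norm_neg, Real.norm_of_nonneg (by positivity)]
  gcongr 2 * π * ?_ * (_ * ?_)
  · exact hy.2.le
  · exact exp_neg_mul_sq_le_of_le m ha.le hy.1.le

theorem hasDerivAt_cube_mul_exp_neg_mul_sq (m y : ℝ) :
    HasDerivAt (fun x => -2 * π * m ^ 2 * x ^ 3 * exp (-π * m ^ 2 * x ^ 2))
      (2 * y ^ 2 * ((2 * π ^ 2 * m ^ 4 * y ^ 2 - 3 * π * m ^ 2) *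
        exp (-π * m ^ 2 * y ^ 2))) y := by
  have := ((hasDerivAt_pow 3 y).const_mul (-2 * π * m ^ 2)).mul (hasDerivAt_exp_neg_mul_sq m y)
  exact this.congr_deriv (by push_cast; ring)

theorem norm_two_mul_sq_mul_thetaSummand_le (n : ℕ) {a b y : ℝ} (ha : 0 < a)
    (hy : y ∈ Ioo a b) :
    ‖2 * y ^ 2 * thetaSummand y n‖ ≤
      2 * b ^ 2 * (2 * π ^ 2 * b ^ 2 + 3 * π) *
        (((n : ℝ) + 1) ^ 4 * exp (-π * ((n : ℝ) + 1) ^ 2 * a ^ 2)) := by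
  have hy0 : 0 < y := ha.trans hy.1
  have hyb : y ^ 2 ≤ b ^ 2 := pow_le_pow_left₀ hy0.le hy.2.le 2
  rw [thetaSummand, Real.norm_eq_abs, abs_mul, abs_of_pos (by positivity : 0 < 2 * y ^ 2),
    abs_mul, abs_of_pos (exp_pos _)]
  set m : ℝ := (n : ℝ) + 1
  have hm : 1 ≤ m ^ 2 := one_le_pow₀ (by simp [m])
  have hcoeff : |2 * π ^ 2 * m ^ 4 * y ^ 2 - 3 * π * m ^ 2| ≤
      (2 * π ^ 2 * b ^ 2 + 3 * π) * m ^ 4 := by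
    have hm4 : m ^ 2 ≤ m ^ 4 := by nlinarith
    have hπ := pi_pos
    rw [abs_le]
    constructor <;>
      nlinarith [mul_le_mul_of_nonneg_left hyb (by positivity : 0 ≤ 2 * π ^ 2 * m ^ 4),
        mul_le_mul_of_nonneg_left hm4 (by positivity : 0 ≤ 3 * π),
        (by positivity : 0 ≤ 2 * π ^ 2 * m ^ 4 * y ^ 2),
        (by positivity : 0 ≤ 2 * π ^ 2 * b ^ 2 * m ^ 4)]
  calc 2 * y ^ 2 * (|2 * π ^ 2 * m ^ 4 * y ^ 2 - 3 * π * m ^ 2| * exp (-π * m ^ 2 * y ^ 2))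
      ≤ 2 * b ^ 2 * ((2 * π ^ 2 * b ^ 2 + 3 * π) * m ^ 4 * exp (-π * m ^ 2 * a ^ 2)) := by
        gcongr 2 * ?_ * (?_ * ?_)
        exact exp_neg_mul_sq_le_of_le m ha.le hy.1.le
    _ = _ := by ring

theorem hasDerivAt_sq_mul_gaussTailDeriv {x : ℝ} (hx : 0 < x) :
    HasDerivAt (fun y => y ^ 2 * gaussTailDeriv y) (Theta x) x := by
  have hfun : (fun y => y ^ 2 * gaussTailDeriv y) = fun y => ∑' n : ℕ,
      -2 * π * ((n : ℝ) + 1) ^ 2 * y ^ 3 * exp (-π * ((n : ℝ) + 1) ^ 2 * y ^ 2) := by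
    ext y
    rw [gaussTailDeriv, ← tsum_mul_left]
    exact tsum_congr fun n => by ring
  rw [hfun, Theta_eq_tsum_thetaSummand, ← tsum_mul_left]
  refine hasDerivAt_tsum_of_gauss_bound 4 (fun b => 2 * b ^ 2 * (2 * π ^ 2 * b ^ 2 + 3 * π))
    (fun n y => hasDerivAt_cube_mul_exp_neg_mul_sq _ y)
    (fun n a b y ha hy => norm_two_mul_sq_mul_thetaSummand_le n ha hy) hx ?_
  refine ((summable_succ_pow_mul_exp_neg_sq 2 hx.ne').mul_left (-2 * π * x ^ 3)).congr
    fun n => ?_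
  ring

theorem tsum_int_exp_neg_mul_sq_eq_one_add_two_mul_gaussTail {y : ℝ} (hy : y ≠ 0) :
    ∑' n : ℤ, exp (-π * y ^ 2 * (n : ℝ) ^ 2) = 1 + 2 * gaussTail y := by
  have hsum : Summable fun n : ℤ => exp (-π * y ^ 2 * (n : ℝ) ^ 2) :=
    (HurwitzKernelBounds.summable_f_int 0 0 (by positivity : 0 < y ^ 2)).congr fun n => by
      simp only [HurwitzKernelBounds.f_int, add_zero, pow_zero, one_mul]
      ring_nf
  rw [tsum_int_eq_zero_add_two_mul_tsum_pnat (fun n => by simp) hsum,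
    tsum_pnat_eq_tsum_succ (f := fun n : ℕ => exp (-π * y ^ 2 * ((n : ℤ) : ℝ) ^ 2)), gaussTail]
  simp only [Int.cast_zero, ne_eq, OfNat.ofNat_ne_zero, not_false_eq_true, zero_pow, mul_zero,
    exp_zero, nsmul_eq_mul, Nat.cast_ofNat, Int.cast_natCast]
  congr 2
  exact tsum_congr fun n => by push_cast; ring_nf

theorem one_add_two_mul_gaussTail_inv {x : ℝ} (hx : 0 < x) :
    1 + 2 * gaussTail x⁻¹ = x * (1 + 2 * gaussTail x) := by
  have h := Real.tsum_exp_neg_mul_int_sq (by positivity : 0 < x ^ 2)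
  have hinv : (fun n : ℤ => exp (-π / x ^ 2 * (n : ℝ) ^ 2))
      = fun n : ℤ => exp (-π * x⁻¹ ^ 2 * (n : ℝ) ^ 2) := by
    ext n; rw [inv_pow, div_eq_mul_inv]
  rw [hinv, ← sqrt_eq_rpow, sqrt_sq hx.le,
    tsum_int_exp_neg_mul_sq_eq_one_add_two_mul_gaussTail hx.ne',
    tsum_int_exp_neg_mul_sq_eq_one_add_two_mul_gaussTail (inv_ne_zero hx.ne')] at h
  rw [h]
  field_simp

theorem Theta_inv {x : ℝ} (hx : 0 < x) : Theta x⁻¹ = x * Theta x := by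
  have := deriv_sq_mul_deriv_inv_eq_mul (h := fun y => 1 + 2 * gaussTail y)
    (h' := fun y => 2 * gaussTailDeriv y) (k := fun y => 2 * (y ^ 2 * gaussTailDeriv y))
    (k' := fun y => 2 * Theta y) (fun y hy => one_add_two_mul_gaussTail_inv hy)
    (fun y hy => ((hasDerivAt_gaussTail hy).const_mul 2).const_add 1)
    (fun y hy => (hasDerivAt_sq_mul_gaussTailDeriv hy).const_mul 2) (fun y _ => by ring) hx
  linarith

theorem thetaSummand_pos {x : ℝ} (hx : 1 ≤ x) (n : ℕ) : 0 < thetaSummand x n := by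
  refine mul_pos ?_ (exp_pos _)
  set m : ℝ := (n : ℝ) + 1
  have hm : 1 ≤ m ^ 2 := one_le_pow₀ (by simp [m])
  have hx2 : 1 ≤ x ^ 2 := one_le_pow₀ hx
  have hmx : m ^ 2 ≤ m ^ 4 * x ^ 2 := by
    rw [show m ^ 4 * x ^ 2 = m ^ 2 * (m ^ 2 * x ^ 2) by ring]
    exact le_mul_of_one_le_right (by positivity) (one_le_mul_of_one_le_of_one_le hm hx2)
  have h2π : 3 * π * m ^ 2 < 2 * π ^ 2 * m ^ 2 := by
    have := pi_gt_three
    nlinarith [mul_pos pi_pos (by positivity : (0 : ℝ) < m ^ 2)]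
  nlinarith [mul_le_mul_of_nonneg_left hmx (by positivity : (0 : ℝ) ≤ 2 * π ^ 2)]

theorem Theta_pos_of_one_le {x : ℝ} (hx : 1 ≤ x) : 0 < Theta x := by
  rw [Theta_eq_tsum_thetaSummand]
  have hpos := thetaSummand_pos hx
  exact mul_pos (by positivity) <|
    (summable_thetaSummand (by positivity)).tsum_pos (fun n => (hpos n).le) 0 (hpos 0)

theorem stmt_18 (x : ℝ) (hx : 0 < x) : 0 < Theta x := by
  rcases le_or_gt 1 x with h | h
  · exact Theta_pos_of_one_le h
  · have := Theta_pos_of_one_le ((one_le_inv₀ hx).2 h.le)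
    rw [Theta_inv hx] at this
    exact pos_of_mul_pos_right this hx.le
end
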